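/- Suppose f is twice continuously differentiable on ℝ^{n×p}. Then for every X ∈ ℝ^{n×p}, the gradient ∇h is differentiable at X and its derivative Hh(X) (the Hessian of h) is given by Hh(X)[D] = J_X( Hf(X·A(X))[ J_X(D) ] ) − D·Φ(Xᵀ·G(X)) − X·Φ(Dᵀ·G(X)) − G(X)·Φ(Dᵀ·X) + β·( 2·X·Φ(Xᵀ·D) + D·(XᵀX − I_p) ) for all D ∈ ℝ^{n×p}, where J_X(D) := D·A(X) − X·Φ(DᵀX). -/

import Mathlib

open Matrix

attribute [local instance] Matrix.frobeniusNormedAddCommGroup Matrix.frobeniusNormedSpace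

namespace ExPen

noncomputable def finner {n p : ℕ} (A B : Matrix (Fin n) (Fin p) ℝ) : ℝ := (Aᵀ * B).trace

noncomputable def Phi {p : ℕ} (M : Matrix (Fin p) (Fin p) ℝ) : Matrix (Fin p) (Fin p) ℝ :=
  (1 / 2 : ℝ) • (M + Mᵀ)

noncomputable def Amap {n p : ℕ} (X : Matrix (Fin n) (Fin p) ℝ) : Matrix (Fin p) (Fin p) ℝ :=
  (3 / 2 : ℝ) • (1 : Matrix (Fin p) (Fin p) ℝ) - (1 / 2 : ℝ) • (Xᵀ * X)

noncomputable def g {n p : ℕ} (f : Matrix (Fin n) (Fin p) ℝ → ℝ)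
    (X : Matrix (Fin n) (Fin p) ℝ) : ℝ := f (X * Amap X)

noncomputable def hpen {n p : ℕ} (f : Matrix (Fin n) (Fin p) ℝ → ℝ) (β : ℝ)
    (X : Matrix (Fin n) (Fin p) ℝ) : ℝ := g f X + β / 4 * ‖Xᵀ * X - 1‖ ^ 2

noncomputable def dualCLM {n p : ℕ} (G : Matrix (Fin n) (Fin p) ℝ) :
    Matrix (Fin n) (Fin p) ℝ →L[ℝ] ℝ :=
  LinearMap.toContinuousLinearMap
    { toFun := fun D => (Gᵀ * D).trace
      map_add' := by intro D E; simp [Matrix.mul_add]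
      map_smul' := by intro c D; simp [Matrix.mul_smul] }

def HasGradAt {n p : ℕ} (φ : Matrix (Fin n) (Fin p) ℝ → ℝ)
    (X G : Matrix (Fin n) (Fin p) ℝ) : Prop :=
  HasFDerivAt φ (dualCLM G) X

noncomputable def specNorm {n p : ℕ} (X : Matrix (Fin n) (Fin p) ℝ) : ℝ :=
  ‖LinearMap.toContinuousLinearMap
    (Matrix.toEuclideanLin X : EuclideanSpace ℝ (Fin p) →ₗ[ℝ] EuclideanSpace ℝ (Fin n))‖

lemma posSemidef_tmul {n p : ℕ} (X : Matrix (Fin n) (Fin p) ℝ) : (Xᵀ * X).PosSemidef := by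
  simpa [Matrix.conjTranspose_eq_transpose_of_trivial] using
    Matrix.posSemidef_conjTranspose_mul_self X

noncomputable def PosSemidef.sqrt {m : Type*} [Fintype m] [DecidableEq m]
    {A : Matrix m m ℝ} (hA : A.PosSemidef) : Matrix m m ℝ :=
  hA.1.eigenvectorUnitary.1 * diagonal ((↑) ∘ (hA.1.eigenvalues · |>.sqrt)) *
    (star hA.1.eigenvectorUnitary : Matrix m m ℝ)

noncomputable def Pst {n p : ℕ} (X : Matrix (Fin n) (Fin p) ℝ) : Matrix (Fin n) (Fin p) ℝ :=
  X * (PosSemidef.sqrt (posSemidef_tmul X) : Matrix (Fin p) (Fin p) ℝ)⁻¹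

/-!
The map `J_X(D) = D·A(X) - X·Φ(DᵀX)` is the derivative of `X ↦ X·A(X)`, and it is self-adjoint
for the Frobenius inner product because `A(X)` and `Φ(·)` are symmetric. Hence the chain rule gives
`∇g(X) = J_X(G(X))` and `∇h(X) = J_X(G(X)) + β·X(XᵀX - I)`. Differentiating this formula once more
with the product rule, where `G` contributes `Hf(X·A(X)) ∘ J_X`, yields the Hessian.
-/

section MatrixCalculus

variable {l m n : Type*} {E : Type*} [NormedAddCommGroup E] [NormedSpace ℝ E]

lemma isBoundedBilinearMap_matrix_mul [Fintype l] [Fintype m] [Fintype n] :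
    IsBoundedBilinearMap ℝ (fun q : Matrix l m ℝ × Matrix m n ℝ => q.1 * q.2) where
  add_left := Matrix.add_mul
  smul_left c A B := Matrix.smul_mul c A B
  add_right := Matrix.mul_add
  smul_right c A B := Matrix.mul_smul A c B
  bound := ⟨1, one_pos, fun A B => by simpa using Matrix.frobenius_norm_mul A B⟩

noncomputable def mulLeftCLM [Fintype m] [Fintype n] (A : Matrix l m ℝ) :
    Matrix m n ℝ →L[ℝ] Matrix l n ℝ :=
  LinearMap.toContinuousLinearMap (mulLeftLinearMap n ℝ A)

noncomputable def mulRightCLM [Fintype l] [Fintype m] (B : Matrix m n ℝ) :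
    Matrix l m ℝ →L[ℝ] Matrix l n ℝ :=
  LinearMap.toContinuousLinearMap (mulRightLinearMap l ℝ B)

noncomputable def transposeCLM [Fintype m] [Fintype n] : Matrix m n ℝ →L[ℝ] Matrix n m ℝ :=
  LinearMap.toContinuousLinearMap (Matrix.transposeLinearEquiv m n ℝ ℝ).toLinearMap

lemma HasFDerivAt.matrix_mul [Fintype l] [Fintype m] [Fintype n]
    {u : E → Matrix l m ℝ} {v : E → Matrix m n ℝ}
    {u' : E →L[ℝ] Matrix l m ℝ} {v' : E →L[ℝ] Matrix m n ℝ} {x : E}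
    (hu : HasFDerivAt u u' x) (hv : HasFDerivAt v v' x) :
    HasFDerivAt (fun y => u y * v y) (mulLeftCLM (u x) ∘L v' + mulRightCLM (v x) ∘L u') x := by
  exact (isBoundedBilinearMap_matrix_mul.hasFDerivAt (u x, v x)).comp x (hu.prodMk hv)

lemma HasFDerivAt.matrix_transpose [Fintype m] [Fintype n]
    {u : E → Matrix m n ℝ} {u' : E →L[ℝ] Matrix m n ℝ} {x : E}
    (hu : HasFDerivAt u u' x) : HasFDerivAt (fun y => (u y)ᵀ) (transposeCLM ∘L u') x := by
  exact transposeCLM.hasFDerivAt.comp x hu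

end MatrixCalculus

section Gradients

variable {n p : ℕ}

lemma finner_comm (A B : Matrix (Fin n) (Fin p) ℝ) : finner A B = finner B A := by
  rw [finner, finner, ← Matrix.trace_transpose, Matrix.transpose_mul, Matrix.transpose_transpose]

lemma finner_mul_right (A : Matrix (Fin n) (Fin p) ℝ) {q : ℕ} (B : Matrix (Fin n) (Fin q) ℝ)
    (C : Matrix (Fin q) (Fin p) ℝ) : finner A (B * C) = finner (Bᵀ * A) C := by
  simp only [finner, Matrix.transpose_mul, Matrix.transpose_transpose, Matrix.mul_assoc]

lemma finner_mul_left (A : Matrix (Fin n) (Fin p) ℝ) {q : ℕ} (B : Matrix (Fin n) (Fin q) ℝ)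
    (C : Matrix (Fin q) (Fin p) ℝ) : finner A (B * C) = finner (A * Cᵀ) B := by
  rw [finner, finner, ← Matrix.mul_assoc, Matrix.trace_mul_comm, Matrix.transpose_mul,
    Matrix.transpose_transpose, Matrix.mul_assoc]

lemma finner_smul_left (c : ℝ) (A B : Matrix (Fin n) (Fin p) ℝ) :
    finner (c • A) B = c * finner A B := by
  rw [finner, finner, Matrix.transpose_smul, Matrix.smul_mul, Matrix.trace_smul, smul_eq_mul]

lemma finner_smul_right (c : ℝ) (A B : Matrix (Fin n) (Fin p) ℝ) :
    finner A (c • B) = c * finner A B := by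
  rw [finner_comm, finner_smul_left, finner_comm]

lemma finner_transpose (A B : Matrix (Fin n) (Fin p) ℝ) : finner Aᵀ Bᵀ = finner A B := by
  rw [finner, finner, Matrix.transpose_transpose, Matrix.trace_mul_comm, ← Matrix.trace_transpose,
    Matrix.transpose_mul, Matrix.transpose_transpose]

lemma frobenius_norm_sq_eq_finner (A : Matrix (Fin n) (Fin p) ℝ) : ‖A‖ ^ 2 = finner A A := by
  rw [Matrix.frobenius_norm_def, ← Real.rpow_natCast, ← Real.rpow_mul (by positivity)]
  simp only [finner, Matrix.trace, Matrix.diag, Matrix.mul_apply, Matrix.transpose_apply,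
    Real.norm_eq_abs]
  rw [Finset.sum_comm]
  norm_num [sq]

lemma HasGradAt.unique {φ : Matrix (Fin n) (Fin p) ℝ → ℝ} {X G₁ G₂ : Matrix (Fin n) (Fin p) ℝ}
    (h₁ : HasGradAt φ X G₁) (h₂ : HasGradAt φ X G₂) : G₁ = G₂ := by
  have hdual : finner G₁ (G₁ - G₂) = finner G₂ (G₁ - G₂) :=
    congrArg (· (G₁ - G₂)) (HasFDerivAt.unique h₁ h₂)
  have hnorm : ‖G₁ - G₂‖ ^ 2 = 0 := by
    rw [frobenius_norm_sq_eq_finner, finner, Matrix.transpose_sub, Matrix.sub_mul,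
      Matrix.trace_sub, ← finner, ← finner, hdual, sub_self]
  simpa [sub_eq_zero] using hnorm

lemma HasGradAt.add {φ ψ : Matrix (Fin n) (Fin p) ℝ → ℝ} {X G₁ G₂ : Matrix (Fin n) (Fin p) ℝ}
    (hφ : HasGradAt φ X G₁) (hψ : HasGradAt ψ X G₂) :
    HasGradAt (fun Y => φ Y + ψ Y) X (G₁ + G₂) := by
  refine (HasFDerivAt.add hφ hψ).congr_fderiv ?_
  ext D
  change finner G₁ D + finner G₂ D = finner (G₁ + G₂) D
  simp only [finner, Matrix.transpose_add, Matrix.add_mul, Matrix.trace_add]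

end Gradients

section Maps

variable {n p : ℕ}

lemma Phi_transpose (M : Matrix (Fin p) (Fin p) ℝ) : Phi Mᵀ = Phi M := by
  rw [Phi, Phi, Matrix.transpose_transpose, add_comm]

lemma transpose_Phi (M : Matrix (Fin p) (Fin p) ℝ) : (Phi M)ᵀ = Phi M := by
  rw [Phi, Matrix.transpose_smul, Matrix.transpose_add, Matrix.transpose_transpose, add_comm]

lemma finner_Phi (A M : Matrix (Fin p) (Fin p) ℝ) : finner A (Phi M) = finner (Phi A) M := by
  have hT : finner A Mᵀ = finner Aᵀ M := by
    rw [finner, finner, ← Matrix.trace_transpose, Matrix.transpose_mul, Matrix.transpose_transpose,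
      Matrix.trace_mul_comm]
  simp only [Phi, finner, Matrix.transpose_smul, Matrix.transpose_add, Matrix.mul_smul,
    Matrix.smul_mul, Matrix.mul_add, Matrix.add_mul, Matrix.trace_smul, Matrix.trace_add] at hT ⊢
  simp only [Matrix.transpose_transpose] at hT ⊢
  linear_combination (1 / 2 : ℝ) • hT

lemma Phi_eq_self {M : Matrix (Fin p) (Fin p) ℝ} (hM : Mᵀ = M) : Phi M = M := by
  rw [Phi, hM]
  module

lemma Amap_transpose (X : Matrix (Fin n) (Fin p) ℝ) : (Amap X)ᵀ = Amap X := by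
  simp [Amap, Matrix.transpose_sub, Matrix.transpose_smul, Matrix.transpose_mul]

noncomputable def phiCLM : Matrix (Fin p) (Fin p) ℝ →L[ℝ] Matrix (Fin p) (Fin p) ℝ :=
  LinearMap.toContinuousLinearMap
    { toFun := Phi
      map_add' := fun A B => by simp only [Phi, Matrix.transpose_add]; module
      map_smul' := fun c A => by simp only [Phi, Matrix.transpose_smul, RingHom.id_apply]; module }

noncomputable def Jmap (X : Matrix (Fin n) (Fin p) ℝ) :
    Matrix (Fin n) (Fin p) ℝ →L[ℝ] Matrix (Fin n) (Fin p) ℝ :=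
  LinearMap.toContinuousLinearMap
    { toFun := fun D => D * Amap X - X * Phi (Dᵀ * X)
      map_add' := fun D E => by
        simp only [Phi, Matrix.transpose_add, Matrix.add_mul, Matrix.mul_add, Matrix.mul_smul]
        module
      map_smul' := fun c D => by
        simp only [Phi, Matrix.transpose_smul, Matrix.smul_mul, Matrix.mul_smul, Matrix.mul_add,
          RingHom.id_apply]
        module }

lemma Jmap_apply (X D : Matrix (Fin n) (Fin p) ℝ) :
    Jmap X D = D * Amap X - X * Phi (Dᵀ * X) := rfl

lemma finner_Jmap (X G D : Matrix (Fin n) (Fin p) ℝ) :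
    finner G (Jmap X D) = finner (Jmap X G) D := by
  have hA : finner G (D * Amap X) = finner (G * Amap X) D := by
    rw [finner_mul_left, Amap_transpose]
  have hPhi : finner G (X * Phi (Dᵀ * X)) = finner (X * Phi (Gᵀ * X)) D := calc
    finner G (X * Phi (Dᵀ * X)) = finner (Phi (Xᵀ * G)) (Dᵀ * X) := by
      rw [finner_mul_right, finner_Phi]
    _ = finner (Phi (Xᵀ * G)) (Xᵀ * D) := by
      rw [← finner_transpose, transpose_Phi, Matrix.transpose_mul, Matrix.transpose_transpose]
    _ = finner (X * Phi (Gᵀ * X)) D := by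
      rw [finner_comm, ← finner_mul_right, finner_comm, ← Phi_transpose, Matrix.transpose_mul,
        Matrix.transpose_transpose]
  simp only [Jmap_apply, finner, Matrix.mul_sub, Matrix.transpose_sub, Matrix.sub_mul,
    Matrix.trace_sub] at hA hPhi ⊢
  rw [hA, hPhi]

end Maps

section Derivatives

/- Derivatives of matrix-valued maps below are built with the Frobenius topology on matrices, while
the statements quantify over continuous linear maps for the product topology. The two are defeq but
not reducibly so, hence derivatives are evaluated with `change` rather than with `simp`. -/

variable {n p : ℕ}

lemma exists_hasFDerivAt_gram (X : Matrix (Fin n) (Fin p) ℝ) :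
    ∃ L : Matrix (Fin n) (Fin p) ℝ →L[ℝ] Matrix (Fin p) (Fin p) ℝ,
      HasFDerivAt (fun Y => Yᵀ * Y) L X ∧ ∀ D, L D = (2 : ℝ) • Phi (Xᵀ * D) := by
  refine ⟨_, HasFDerivAt.matrix_mul (HasFDerivAt.matrix_transpose (hasFDerivAt_id X))
    (hasFDerivAt_id X), fun D => ?_⟩
  change Xᵀ * D + Dᵀ * X = _
  simp only [Phi, Matrix.transpose_mul, Matrix.transpose_transpose]
  module

lemma exists_hasFDerivAt_Amap (X : Matrix (Fin n) (Fin p) ℝ) :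
    ∃ L : Matrix (Fin n) (Fin p) ℝ →L[ℝ] Matrix (Fin p) (Fin p) ℝ,
      HasFDerivAt Amap L X ∧ ∀ D, L D = -Phi (Xᵀ * D) := by
  obtain ⟨L, hL, hL_apply⟩ := exists_hasFDerivAt_gram X
  refine ⟨_, (hL.const_smul (1 / 2 : ℝ)).const_sub ((3 / 2 : ℝ) • 1), fun D => ?_⟩
  change -((1 / 2 : ℝ) • L D) = _
  rw [hL_apply, smul_smul]
  norm_num

lemma hasFDerivAt_mul_Amap (X : Matrix (Fin n) (Fin p) ℝ) :
    HasFDerivAt (fun Y => Y * Amap Y) (Jmap X) X := by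
  obtain ⟨L, hL, hL_apply⟩ := exists_hasFDerivAt_Amap X
  refine (HasFDerivAt.matrix_mul (hasFDerivAt_id X) hL).congr_fderiv
    (ContinuousLinearMap.ext fun D => ?_)
  change X * L D + D * Amap X = Jmap X D
  rw [hL_apply, Jmap_apply, ← Phi_transpose, Matrix.transpose_mul, Matrix.transpose_transpose,
    Matrix.mul_neg]
  abel

lemma hasGradAt_frobenius_norm_sq (M : Matrix (Fin n) (Fin p) ℝ) :
    HasGradAt (fun N => ‖N‖ ^ 2) M ((2 : ℝ) • M) := by
  have h := (LinearMap.toContinuousLinearMap (Matrix.traceLinearMap (Fin p) ℝ ℝ)).hasFDerivAt.comp M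
    (HasFDerivAt.matrix_mul (HasFDerivAt.matrix_transpose (hasFDerivAt_id M)) (hasFDerivAt_id M))
  rw [HasGradAt, funext frobenius_norm_sq_eq_finner]
  refine h.congr_fderiv (ContinuousLinearMap.ext fun D => ?_)
  change (Mᵀ * D + Dᵀ * M).trace = finner ((2 : ℝ) • M) D
  rw [Matrix.trace_add, ← finner, ← finner, finner_comm D, finner_smul_left]
  ring

lemma HasGradAt.comp_mul_Amap {f : Matrix (Fin n) (Fin p) ℝ → ℝ} {X G : Matrix (Fin n) (Fin p) ℝ}
    (hf : HasGradAt f (X * Amap X) G) : HasGradAt (g f) X (Jmap X G) := by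
  refine (HasFDerivAt.comp (f := fun Y => Y * Amap Y) X hf (hasFDerivAt_mul_Amap X)).congr_fderiv
    (ContinuousLinearMap.ext fun D => ?_)
  exact finner_Jmap X G D

lemma hasGradAt_penalty (β : ℝ) (X : Matrix (Fin n) (Fin p) ℝ) :
    HasGradAt (fun Y => β / 4 * ‖Yᵀ * Y - 1‖ ^ 2) X (β • (X * (Xᵀ * X - 1))) := by
  obtain ⟨L, hL, hL_apply⟩ := exists_hasFDerivAt_gram X
  have hR : (Xᵀ * X - 1)ᵀ = Xᵀ * X - 1 := by
    rw [Matrix.transpose_sub, Matrix.transpose_mul, Matrix.transpose_transpose,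
      Matrix.transpose_one]
  refine ((HasFDerivAt.comp X (hasGradAt_frobenius_norm_sq _) (hL.sub_const 1)).const_mul
    (β / 4)).congr_fderiv (ContinuousLinearMap.ext fun D => ?_)
  change β / 4 * finner ((2 : ℝ) • (Xᵀ * X - 1)) (L D) = finner (β • (X * (Xᵀ * X - 1))) D
  rw [hL_apply, finner_smul_left, finner_smul_right, finner_Phi, Phi_eq_self hR, finner_mul_right,
    finner_smul_left, Matrix.transpose_transpose]
  ring

lemma hasGradAt_hpen {f : Matrix (Fin n) (Fin p) ℝ → ℝ} {X G : Matrix (Fin n) (Fin p) ℝ}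
    (hf : HasGradAt f (X * Amap X) G) (β : ℝ) :
    HasGradAt (hpen f β) X (Jmap X G + β • (X * (Xᵀ * X - 1))) :=
  hf.comp_mul_Amap.add (hasGradAt_penalty β X)

lemma exists_hasFDerivAt_Jmap_apply {M : Matrix (Fin n) (Fin p) ℝ → Matrix (Fin n) (Fin p) ℝ}
    {M' : Matrix (Fin n) (Fin p) ℝ →L[ℝ] Matrix (Fin n) (Fin p) ℝ} {X : Matrix (Fin n) (Fin p) ℝ}
    (hM : HasFDerivAt M M' X) :
    ∃ L : Matrix (Fin n) (Fin p) ℝ →L[ℝ] Matrix (Fin n) (Fin p) ℝ,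
      HasFDerivAt (fun Y => Jmap Y (M Y)) L X ∧
      ∀ D, L D = Jmap X (M' D) - D * Phi (Xᵀ * M X) - X * Phi (Dᵀ * M X) - M X * Phi (Dᵀ * X) := by
  obtain ⟨A', hA', hA'_apply⟩ := exists_hasFDerivAt_Amap X
  have hMA := HasFDerivAt.matrix_mul hM hA'
  have hPhi := phiCLM.hasFDerivAt.comp X
    (HasFDerivAt.matrix_mul (HasFDerivAt.matrix_transpose hM) (hasFDerivAt_id X))
  refine ⟨_, hMA.sub (HasFDerivAt.matrix_mul (hasFDerivAt_id X) hPhi), fun D => ?_⟩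
  change M X * A' D + M' D * Amap X - (X * Phi ((M X)ᵀ * D + (M' D)ᵀ * X) + D * Phi ((M X)ᵀ * X))
    = _
  rw [hA'_apply, Jmap_apply]
  simp only [Phi, Matrix.transpose_add, Matrix.transpose_mul, Matrix.transpose_transpose,
    Matrix.mul_add, Matrix.mul_smul, Matrix.mul_neg, smul_add]
  module

lemma exists_hasFDerivAt_mul_gram_sub_one (X : Matrix (Fin n) (Fin p) ℝ) :
    ∃ L : Matrix (Fin n) (Fin p) ℝ →L[ℝ] Matrix (Fin n) (Fin p) ℝ,
      HasFDerivAt (fun Y => Y * (Yᵀ * Y - 1)) L X ∧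
      ∀ D, L D = (2 : ℝ) • (X * Phi (Xᵀ * D)) + D * (Xᵀ * X - 1) := by
  obtain ⟨L, hL, hL_apply⟩ := exists_hasFDerivAt_gram X
  refine ⟨_, HasFDerivAt.matrix_mul (hasFDerivAt_id X) (hL.sub_const 1), fun D => ?_⟩
  change X * L D + D * (Xᵀ * X - 1) = _
  rw [hL_apply, Matrix.mul_smul]

end Derivatives

theorem statement_2_general {n p : ℕ} (f : Matrix (Fin n) (Fin p) ℝ → ℝ) (β : ℝ)
    (gradf : Matrix (Fin n) (Fin p) ℝ → Matrix (Fin n) (Fin p) ℝ)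
    (hgradf : ∀ Y, HasGradAt f Y (gradf Y))
    (Hf : Matrix (Fin n) (Fin p) ℝ → Matrix (Fin n) (Fin p) ℝ →L[ℝ] Matrix (Fin n) (Fin p) ℝ)
    (hHf : ∀ Y, HasFDerivAt gradf (Hf Y) Y)
    (gradh : Matrix (Fin n) (Fin p) ℝ → Matrix (Fin n) (Fin p) ℝ)
    (hgradh : ∀ Y, HasGradAt (hpen f β) Y (gradh Y))
    (X : Matrix (Fin n) (Fin p) ℝ) :
    ∃ Hh : Matrix (Fin n) (Fin p) ℝ →L[ℝ] Matrix (Fin n) (Fin p) ℝ,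
      HasFDerivAt gradh Hh X ∧
      ∀ D,
        Hh D =
          ((Hf (X * Amap X) (D * Amap X - X * Phi (Dᵀ * X))) * Amap X
              - X * Phi ((Hf (X * Amap X) (D * Amap X - X * Phi (Dᵀ * X)))ᵀ * X))
            - D * Phi (Xᵀ * gradf (X * Amap X))
            - X * Phi (Dᵀ * gradf (X * Amap X))
            - gradf (X * Amap X) * Phi (Dᵀ * X)
            + β • ((2 : ℝ) • (X * Phi (Xᵀ * D)) + D * (Xᵀ * X - 1)) := by
  have hgradh_eq : gradh = fun Y => Jmap Y (gradf (Y * Amap Y)) + β • (Y * (Yᵀ * Y - 1)) :=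
    funext fun Y => (hgradh Y).unique (hasGradAt_hpen (hgradf _) β)
  obtain ⟨L₁, hL₁, hL₁_apply⟩ :=
    exists_hasFDerivAt_Jmap_apply ((hHf (X * Amap X)).comp X (hasFDerivAt_mul_Amap X))
  obtain ⟨L₂, hL₂, hL₂_apply⟩ := exists_hasFDerivAt_mul_gram_sub_one X
  refine ⟨L₁ + β • L₂, hgradh_eq ▸ hL₁.add (hL₂.const_smul β), fun D => ?_⟩
  change L₁ D + β • L₂ D = _
  rw [hL₁_apply, hL₂_apply, Jmap_apply]
  rfl

theorem statement_2 {n p : ℕ} (f : Matrix (Fin n) (Fin p) ℝ → ℝ) (β : ℝ)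
    (gradf : Matrix (Fin n) (Fin p) ℝ → Matrix (Fin n) (Fin p) ℝ)
    (hgradf : ∀ Y, HasGradAt f Y (gradf Y))
    (Hf : Matrix (Fin n) (Fin p) ℝ → Matrix (Fin n) (Fin p) ℝ →L[ℝ] Matrix (Fin n) (Fin p) ℝ)
    (hHf : ∀ Y, HasFDerivAt gradf (Hf Y) Y)
    (hHfCont : Continuous Hf)
    (gradh : Matrix (Fin n) (Fin p) ℝ → Matrix (Fin n) (Fin p) ℝ)
    (hgradh : ∀ Y, HasGradAt (hpen f β) Y (gradh Y))
    (X : Matrix (Fin n) (Fin p) ℝ) :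
    ∃ Hh : Matrix (Fin n) (Fin p) ℝ →L[ℝ] Matrix (Fin n) (Fin p) ℝ,
      HasFDerivAt gradh Hh X ∧
      ∀ D,
        Hh D =
          ((Hf (X * Amap X) (D * Amap X - X * Phi (Dᵀ * X))) * Amap X
              - X * Phi ((Hf (X * Amap X) (D * Amap X - X * Phi (Dᵀ * X)))ᵀ * X))
            - D * Phi (Xᵀ * gradf (X * Amap X))
            - X * Phi (Dᵀ * gradf (X * Amap X))
            - gradf (X * Amap X) * Phi (Dᵀ * X)
            + β • ((2 : ℝ) • (X * Phi (Xᵀ * D)) + D * (Xᵀ * X - 1)) :=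
  statement_2_general f β gradf hgradf Hf hHf gradh hgradh X

end ExPen
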